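/- Let 0 < δ < 1/1000, n large, and suppose V(G) is partitioned into U_1, U_2, U_3, U_4 with |U_j| ≥ (1/4 - 4δ)n for each j, where G has minimum degree at least (3n-1)/4, and the bipartite graphs R[U_1 ∪ U_2, U_3 ∪ U_4] and B[U_1 ∪ U_3, U_2 ∪ U_4] each have maximum degree at most δn. Then in each of the bipartite graphs R[U_1, U_2], R[U_3, U_4], B[U_1, U_3], B[U_2, U_4], every vertex has deficiency at most 7δn, where the deficiency of a vertex is the size of the opposite part minus its degree. -/

import Mathlib

/-!
A vertex `v ∈ U₁` has at most `δn` red and at most `δn` blue neighbours in `U₄`, so it misses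
at least `|U₄| - 2δn ≥ (1/4 - 6δ)n` vertices of `U₄`. As its minimum degree leaves it fewer than
`n/4` non-neighbours in total, it misses at most `6δn` vertices of `U₂`; of its neighbours in `U₂`
at most `δn` are joined to it by a blue edge only, so its deficiency in `R[U₁, U₂]` is at most
`7δn`. The other seven cases are the same argument with the parts and colours permuted.
-/

open Finset

namespace SimpleGraph

variable {V : Type*} [DecidableEq V] {G X Y : SimpleGraph V}
  [DecidableRel G.Adj] [DecidableRel X.Adj] [DecidableRel Y.Adj] {v : V} {S T O : Finset V}

theorem card_filter_adj_le_add (hG : G ≤ X ⊔ Y) :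
    #{w ∈ S | G.Adj v w} ≤ #{w ∈ S | X.Adj v w} + #{w ∈ S | Y.Adj v w} := by
  refine (card_le_card fun w hw => ?_).trans (card_union_le _ _)
  rw [mem_filter] at hw
  simpa [mem_union, mem_filter, hw.1] using hG hw.2

theorem card_filter_not_adj_le_add (hG : G ≤ X ⊔ Y) :
    #{w ∈ S | ¬X.Adj v w} ≤ #{w ∈ S | ¬G.Adj v w} + #{w ∈ S | Y.Adj v w} := by
  refine (card_le_card fun w hw => ?_).trans (card_union_le _ _)
  rw [mem_filter] at hw
  by_cases hY : Y.Adj v w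
  · exact mem_union_right _ (mem_filter.2 ⟨hw.1, hY⟩)
  · refine mem_union_left _ (mem_filter.2 ⟨hw.1, fun h => ?_⟩)
    exact (hG h).elim hw.2 hY

variable [Fintype V]

theorem card_filter_not_adj_add_degree_lt (hv : v ∉ S) :
    #{w ∈ S | ¬G.Adj v w} + G.degree v < Fintype.card V := by
  have hsub : {w ∈ S | ¬G.Adj v w} ⊆ Gᶜ.neighborFinset v := fun w hw => by
    rw [mem_filter] at hw
    exact (mem_neighborFinset _ _ _).2 ⟨fun h => hv (h ▸ hw.1), hw.2⟩
  have := card_le_card hsub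
  rw [card_neighborFinset_eq_degree, degree_compl] at this
  have := G.degree_lt_card_verts v
  omega

theorem card_filter_not_adj_add_lt (hG : G ≤ X ⊔ Y) (hTO : Disjoint T O) (hvT : v ∉ T)
    (hvO : v ∉ O) :
    #{w ∈ T | ¬X.Adj v w} + G.degree v + #O < Fintype.card V + #{w ∈ O | X.Adj v w} +
      #{w ∈ O | Y.Adj v w} + #{w ∈ T | Y.Adj v w} := by
  have hT := card_filter_not_adj_le_add (S := T) (v := v) hG
  have hOG := card_filter_adj_le_add (S := O) (v := v) hG
  have hO := card_filter_add_card_filter_not (s := O) (fun w => G.Adj v w)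
  have hTO' := card_filter_not_adj_add_degree_lt (G := G) (mt mem_union.1 (not_or.2 ⟨hvT, hvO⟩))
  rw [filter_union, card_union_of_disjoint (disjoint_filter_filter hTO)] at hTO'
  omega

theorem card_filter_not_adj_le_of_sparse {δ : ℝ} {n : ℕ} (hn : Fintype.card V = n)
    (hdeg : (3 * (n : ℝ) - 1) / 4 ≤ G.degree v) (hG : G ≤ X ⊔ Y) (hTO : Disjoint T O)
    (hvT : v ∉ T) (hvO : v ∉ O) (hO : ((1 : ℝ) / 4 - 4 * δ) * n ≤ #O)
    (hXO : (#{w ∈ O | X.Adj v w} : ℝ) ≤ δ * n) (hYO : (#{w ∈ O | Y.Adj v w} : ℝ) ≤ δ * n)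
    (hYT : (#{w ∈ T | Y.Adj v w} : ℝ) ≤ δ * n) :
    (#{w ∈ T | ¬X.Adj v w} : ℝ) ≤ 7 * δ * n := by
  have key := card_filter_not_adj_add_lt hG hTO hvT hvO
  rw [hn, Nat.lt_iff_add_one_le, ← Nat.cast_le (α := ℝ)] at key
  push_cast at key
  linarith

end SimpleGraph

theorem cast_card_filter_le_of_subset {V : Type*} {S S' : Finset V} {p : V → Prop}
    [DecidablePred p] {c : ℝ} (h : S ⊆ S') (hc : (#(S'.filter p) : ℝ) ≤ c) :
    (#(S.filter p) : ℝ) ≤ c :=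
  (Nat.cast_le.2 (card_le_card (filter_subset_filter p h))).trans hc

theorem deficiency_le_of_sparse_cuts {V : Type*} [Fintype V] [DecidableEq V] {δ : ℝ} {n : ℕ}
    {G R B : SimpleGraph V} [DecidableRel G.Adj] [DecidableRel R.Adj] [DecidableRel B.Adj]
    (hn : Fintype.card V = n) (hdeg : ∀ v, (3 * (n : ℝ) - 1) / 4 ≤ G.degree v)
    (hG : G ≤ R ⊔ B) {U1 U2 U3 U4 : Finset V}
    (hdisj : ([U1, U2, U3, U4] : List (Finset V)).Pairwise Disjoint)
    (hU1 : ((1 : ℝ) / 4 - 4 * δ) * n ≤ #U1) (hU2 : ((1 : ℝ) / 4 - 4 * δ) * n ≤ #U2)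
    (hU3 : ((1 : ℝ) / 4 - 4 * δ) * n ≤ #U3) (hU4 : ((1 : ℝ) / 4 - 4 * δ) * n ≤ #U4)
    (hR12 : ∀ v ∈ U1 ∪ U2, (#{w ∈ U3 ∪ U4 | R.Adj v w} : ℝ) ≤ δ * n)
    (hR34 : ∀ v ∈ U3 ∪ U4, (#{w ∈ U1 ∪ U2 | R.Adj v w} : ℝ) ≤ δ * n)
    (hB13 : ∀ v ∈ U1 ∪ U3, (#{w ∈ U2 ∪ U4 | B.Adj v w} : ℝ) ≤ δ * n)
    (hB24 : ∀ v ∈ U2 ∪ U4, (#{w ∈ U1 ∪ U3 | B.Adj v w} : ℝ) ≤ δ * n) :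
    (∀ v ∈ U1, (#{w ∈ U2 | ¬R.Adj v w} : ℝ) ≤ 7 * δ * n) ∧
    (∀ v ∈ U2, (#{w ∈ U1 | ¬R.Adj v w} : ℝ) ≤ 7 * δ * n) ∧
    (∀ v ∈ U3, (#{w ∈ U4 | ¬R.Adj v w} : ℝ) ≤ 7 * δ * n) ∧
    (∀ v ∈ U4, (#{w ∈ U3 | ¬R.Adj v w} : ℝ) ≤ 7 * δ * n) := by
  simp only [List.pairwise_cons, List.mem_cons, List.not_mem_nil, or_false, IsEmpty.forall_iff, implies_true, forall_eq_or_imp,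
    forall_eq, List.Pairwise.nil, and_true] at hdisj
  obtain ⟨⟨h12, h13, h14⟩, ⟨h23, h24⟩, h34⟩ := hdisj
  refine ⟨fun v hv => ?_, fun v hv => ?_, fun v hv => ?_, fun v hv => ?_⟩
  · exact SimpleGraph.card_filter_not_adj_le_of_sparse hn (hdeg v) hG h24 (disjoint_left.1 h12 hv)
      (disjoint_left.1 h14 hv) hU4
      (cast_card_filter_le_of_subset subset_union_right (hR12 v (mem_union_left _ hv)))
      (cast_card_filter_le_of_subset subset_union_right (hB13 v (mem_union_left _ hv)))
      (cast_card_filter_le_of_subset subset_union_left (hB13 v (mem_union_left _ hv)))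
  · exact SimpleGraph.card_filter_not_adj_le_of_sparse hn (hdeg v) hG h13 (disjoint_right.1 h12 hv)
      (disjoint_left.1 h23 hv) hU3
      (cast_card_filter_le_of_subset subset_union_left (hR12 v (mem_union_right _ hv)))
      (cast_card_filter_le_of_subset subset_union_right (hB24 v (mem_union_left _ hv)))
      (cast_card_filter_le_of_subset subset_union_left (hB24 v (mem_union_left _ hv)))
  · exact SimpleGraph.card_filter_not_adj_le_of_sparse hn (hdeg v) hG h24.symm (disjoint_left.1 h34 hv)
      (disjoint_right.1 h23 hv) hU2
      (cast_card_filter_le_of_subset subset_union_right (hR34 v (mem_union_left _ hv)))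
      (cast_card_filter_le_of_subset subset_union_left (hB13 v (mem_union_right _ hv)))
      (cast_card_filter_le_of_subset subset_union_right (hB13 v (mem_union_right _ hv)))
  · exact SimpleGraph.card_filter_not_adj_le_of_sparse hn (hdeg v) hG h13.symm (disjoint_right.1 h34 hv)
      (disjoint_right.1 h14 hv) hU1
      (cast_card_filter_le_of_subset subset_union_left (hR34 v (mem_union_right _ hv)))
      (cast_card_filter_le_of_subset subset_union_left (hB24 v (mem_union_right _ hv)))
      (cast_card_filter_le_of_subset subset_union_right (hB24 v (mem_union_right _ hv)))

theorem stmt18_general (δ : ℝ) :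
    ∃ n₀ : ℕ, ∀ n : ℕ, n₀ ≤ n →
    ∀ (V : Type) [Fintype V] [DecidableEq V]
      (G R B : SimpleGraph V)
      [DecidableRel G.Adj] [DecidableRel R.Adj] [DecidableRel B.Adj],
      Fintype.card V = n →
      -- minimum degree at least (3n - 1)/4
      (∀ v : V, (3 * (n : ℝ) - 1) / 4 ≤ G.degree v) →
      -- 2-edge-coloring (colors may overlap)
      R ⊔ B = G →
      ∀ U1 U2 U3 U4 : Finset V,
        ([U1, U2, U3, U4] : List (Finset V)).Pairwise Disjoint →
        U1 ∪ U2 ∪ U3 ∪ U4 = (Finset.univ : Finset V) →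
        -- |U_j| ≥ (1/4 - 4δ)n
        ((1 : ℝ) / 4 - 4 * δ) * n ≤ U1.card →
        ((1 : ℝ) / 4 - 4 * δ) * n ≤ U2.card →
        ((1 : ℝ) / 4 - 4 * δ) * n ≤ U3.card →
        ((1 : ℝ) / 4 - 4 * δ) * n ≤ U4.card →
        -- Δ(R[U1 ∪ U2, U3 ∪ U4]) ≤ δn
        (∀ v ∈ U1 ∪ U2, (((U3 ∪ U4).filter fun w => R.Adj v w).card : ℝ) ≤ δ * n) →
        (∀ v ∈ U3 ∪ U4, (((U1 ∪ U2).filter fun w => R.Adj v w).card : ℝ) ≤ δ * n) →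
        -- Δ(B[U1 ∪ U3, U2 ∪ U4]) ≤ δn
        (∀ v ∈ U1 ∪ U3, (((U2 ∪ U4).filter fun w => B.Adj v w).card : ℝ) ≤ δ * n) →
        (∀ v ∈ U2 ∪ U4, (((U1 ∪ U3).filter fun w => B.Adj v w).card : ℝ) ≤ δ * n) →
        -- conclusion: every vertex has deficiency at most 7δn in each of
        -- R[U1, U2], R[U3, U4], B[U1, U3], B[U2, U4]
        ((∀ v ∈ U1, ((U2.filter fun w => ¬ R.Adj v w).card : ℝ) ≤ 7 * δ * n) ∧
         (∀ v ∈ U2, ((U1.filter fun w => ¬ R.Adj v w).card : ℝ) ≤ 7 * δ * n) ∧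
         (∀ v ∈ U3, ((U4.filter fun w => ¬ R.Adj v w).card : ℝ) ≤ 7 * δ * n) ∧
         (∀ v ∈ U4, ((U3.filter fun w => ¬ R.Adj v w).card : ℝ) ≤ 7 * δ * n) ∧
         (∀ v ∈ U1, ((U3.filter fun w => ¬ B.Adj v w).card : ℝ) ≤ 7 * δ * n) ∧
         (∀ v ∈ U3, ((U1.filter fun w => ¬ B.Adj v w).card : ℝ) ≤ 7 * δ * n) ∧
         (∀ v ∈ U2, ((U4.filter fun w => ¬ B.Adj v w).card : ℝ) ≤ 7 * δ * n) ∧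
         (∀ v ∈ U4, ((U2.filter fun w => ¬ B.Adj v w).card : ℝ) ≤ 7 * δ * n)) := by
  refine ⟨0, fun n _ V _ _ G R B _ _ _ hn hdeg hRB U1 U2 U3 U4 hdisj _ hU1 hU2 hU3 hU4
    hR12 hR34 hB13 hB24 => ?_⟩
  -- the hypotheses are invariant under swapping `R ↔ B` together with `U2 ↔ U3`
  have hdisj' : ([U1, U3, U2, U4] : List (Finset V)).Pairwise Disjoint :=
    ((List.Perm.swap U3 U2 [U4]).cons U1).pairwise hdisj fun h => h.symm
  obtain ⟨r1, r2, r3, r4⟩ := deficiency_le_of_sparse_cuts hn hdeg hRB.ge hdisj hU1 hU2 hU3 hU4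
    hR12 hR34 hB13 hB24
  obtain ⟨b1, b3, b2, b4⟩ := deficiency_le_of_sparse_cuts hn hdeg (hRB.ge.trans_eq (sup_comm R B)) hdisj'
    hU1 hU3 hU2 hU4 hB13 hB24 hR12 hR34
  exact ⟨r1, r2, r3, r4, b1, b3, b2, b4⟩

theorem stmt18 (δ : ℝ) (hδ0 : 0 < δ) (hδ1 : δ < 1 / 1000) :
    ∃ n₀ : ℕ, ∀ n : ℕ, n₀ ≤ n →
    ∀ (V : Type) [Fintype V] [DecidableEq V]
      (G R B : SimpleGraph V)
      [DecidableRel G.Adj] [DecidableRel R.Adj] [DecidableRel B.Adj],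
      Fintype.card V = n →
      -- minimum degree at least (3n - 1)/4
      (∀ v : V, (3 * (n : ℝ) - 1) / 4 ≤ G.degree v) →
      -- 2-edge-coloring (colors may overlap)
      R ⊔ B = G →
      ∀ U1 U2 U3 U4 : Finset V,
        ([U1, U2, U3, U4] : List (Finset V)).Pairwise Disjoint →
        U1 ∪ U2 ∪ U3 ∪ U4 = (Finset.univ : Finset V) →
        -- |U_j| ≥ (1/4 - 4δ)n
        ((1 : ℝ) / 4 - 4 * δ) * n ≤ U1.card →
        ((1 : ℝ) / 4 - 4 * δ) * n ≤ U2.card →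
        ((1 : ℝ) / 4 - 4 * δ) * n ≤ U3.card →
        ((1 : ℝ) / 4 - 4 * δ) * n ≤ U4.card →
        -- Δ(R[U1 ∪ U2, U3 ∪ U4]) ≤ δn
        (∀ v ∈ U1 ∪ U2, (((U3 ∪ U4).filter fun w => R.Adj v w).card : ℝ) ≤ δ * n) →
        (∀ v ∈ U3 ∪ U4, (((U1 ∪ U2).filter fun w => R.Adj v w).card : ℝ) ≤ δ * n) →
        -- Δ(B[U1 ∪ U3, U2 ∪ U4]) ≤ δn
        (∀ v ∈ U1 ∪ U3, (((U2 ∪ U4).filter fun w => B.Adj v w).card : ℝ) ≤ δ * n) →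
        (∀ v ∈ U2 ∪ U4, (((U1 ∪ U3).filter fun w => B.Adj v w).card : ℝ) ≤ δ * n) →
        -- conclusion: every vertex has deficiency at most 7δn in each of
        -- R[U1, U2], R[U3, U4], B[U1, U3], B[U2, U4]
        ((∀ v ∈ U1, ((U2.filter fun w => ¬ R.Adj v w).card : ℝ) ≤ 7 * δ * n) ∧
         (∀ v ∈ U2, ((U1.filter fun w => ¬ R.Adj v w).card : ℝ) ≤ 7 * δ * n) ∧
         (∀ v ∈ U3, ((U4.filter fun w => ¬ R.Adj v w).card : ℝ) ≤ 7 * δ * n) ∧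
         (∀ v ∈ U4, ((U3.filter fun w => ¬ R.Adj v w).card : ℝ) ≤ 7 * δ * n) ∧
         (∀ v ∈ U1, ((U3.filter fun w => ¬ B.Adj v w).card : ℝ) ≤ 7 * δ * n) ∧
         (∀ v ∈ U3, ((U1.filter fun w => ¬ B.Adj v w).card : ℝ) ≤ 7 * δ * n) ∧
         (∀ v ∈ U2, ((U4.filter fun w => ¬ B.Adj v w).card : ℝ) ≤ 7 * δ * n) ∧
         (∀ v ∈ U4, ((U2.filter fun w => ¬ B.Adj v w).card : ℝ) ≤ 7 * δ * n)) :=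
  stmt18_general δ
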